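/- arXiv:cs/0502046 — 5 statements merged into one kernel-verified Lean document; each statement's English description precedes it below -/
import Mathlib

section
/- The guard of the dovetail of F and G is the union of the guards: complement of (F ▽ G)(∅) = complement of F(∅) ∪ complement of G(∅). -/
theorem guard_of_dovetail {U : Type*} (F G LF LG : Set U → Set U)
    (pairF : ∀ s : Set U, F s = LF s ∩ F Set.univ)
    (pairG : ∀ s : Set U, G s = LG s ∩ G Set.univ) :
    ((LF ∅ ∩ LG ∅) ∩
      ((F Set.univ ∩ G Set.univ) ∪ ((F ∅)ᶜ ∩ F Set.univ) ∪ ((G ∅)ᶜ ∩ G Set.univ)))ᶜ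
      = (F ∅)ᶜ ∪ (G ∅)ᶜ := by
  have hF := pairF ∅
  have hG := pairG ∅
  ext x
  have hFx : x ∈ F ∅ ↔ x ∈ LF ∅ ∧ x ∈ F Set.univ := by rw [hF]; rfl
  have hGx : x ∈ G ∅ ↔ x ∈ LG ∅ ∧ x ∈ G Set.univ := by rw [hG]; rfl
  simp only [Set.mem_compl_iff, Set.mem_inter_iff, Set.mem_union] at *
  tauto
end

section
/- (Partial correctness core) Let F, G : 𝒫(u) → 𝒫(u) be monotone, and p, q ⊆ u with p ∩ (complement of q) ⊆ F(p ∪ q) and p ∩ (complement of q) ⊆ G(q). Define 𝓕(x) = q ∪ (G(q) ∩ F(x)). Then p ∪ q ⊆ 𝓕(p ∪ q), and consequently p ∪ q is contained in the greatest fixpoint of 𝓕. -/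
theorem partial_correctness_core {U : Type*}
    (F G : Set U → Set U) (hF : Monotone F) (hG : Monotone G)
    (p q : Set U)
    (h0 : p ∩ qᶜ ⊆ F (p ∪ q))
    (h1 : p ∩ qᶜ ⊆ G q) :
    p ∪ q ⊆ q ∪ (G q ∩ F (p ∪ q)) ∧
      p ∪ q ⊆ ⋃₀ {x : Set U | x ⊆ q ∪ (G q ∩ F x)} := by
  have key : p ∪ q ⊆ q ∪ (G q ∩ F (p ∪ q)) := by
    intro x hx
    by_cases hq : x ∈ q
    · exact Or.inl hq
    · rcases hx with hp | hq'
      · exact Or.inr ⟨h1 ⟨hp, hq⟩, h0 ⟨hp, hq⟩⟩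
      · exact absurd hq' hq
  exact ⟨key, fun x hx => ⟨p ∪ q, key, hx⟩⟩
end

section
/- (Total correctness of fair iteration) Under the operational model L(X(q))(r) = FIX(x ↦ q ∪ (G(r) ∩ F(x))) and pre(X(q)) ⊇ grd(G) ∪ q, if p ∩ complement of q ⊆ F(p ∪ q), p ∩ complement of q ⊆ grd(G), and p ∩ complement of q ⊆ G(q), then p ∪ q ⊆ X(q)(q), where X(q)(q) = L(X(q))(q) ∩ pre(X(q)). -/
/-- Total correctness of the fair iteration: `L(X(q))(r)` is the greatest fixpoint
(the union of post-fixpoints) of `x ↦ q ∪ (G(r) ∩ F(x))`, the termination set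
`preX` contains `grd(G) ∪ q`, and `X(q)(q) = L(X(q))(q) ∩ preX`. -/
theorem fair_iteration_total_correctness {U : Type*}
    (F G : Set U → Set U) (hF : Monotone F) (hG : Monotone G)
    (hFtot : F Set.univ = Set.univ) (hGtot : G Set.univ = Set.univ)
    (LXq : Set U → Set U) (preX : Set U) (p q : Set U)
    (hL : ∀ r : Set U, LXq r = ⋃₀ {x : Set U | x ⊆ q ∪ (G r ∩ F x)})
    (hpre : (G ∅)ᶜ ∪ q ⊆ preX)
    (h0 : p ∩ qᶜ ⊆ F (p ∪ q))
    (h1 : p ∩ qᶜ ⊆ (G ∅)ᶜ)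
    (h2 : p ∩ qᶜ ⊆ G q) :
    p ∪ q ⊆ LXq q ∩ preX := by
  intro x hx
  constructor
  · rw [hL]
    refine Set.mem_sUnion.2 ⟨p ∪ q, ?_, hx⟩
    intro y hy
    by_cases hyq : y ∈ q
    · exact Or.inl hyq
    · have hpy : y ∈ p ∩ qᶜ := ⟨hy.resolve_right hyq, hyq⟩
      exact Or.inr ⟨h2 hpy, h0 hpy⟩
  · apply hpre
    by_cases hxq : x ∈ q
    · exact Or.inr hxq
    · exact Or.inl (h1 ⟨hx.resolve_right hxq, hxq⟩)
end

section
/- (Refinement transfer) If F is refined by F', i.e., for all s ⊆ v: F(complement of r[complement of s]) ⊆ complement of r[complement of F'(s)], and F is monotone, then for all s ⊆ u: r⁻¹[F(s)] ⊆ F'(r⁻¹[s]). -/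
def relImage {V U : Type*} (r : Set (V × U)) (a : Set V) : Set U :=
  {x | ∃ y ∈ a, (y, x) ∈ r}

def relPreimage {V U : Type*} (r : Set (V × U)) (b : Set U) : Set V :=
  {y | ∃ x ∈ b, (y, x) ∈ r}

theorem refinement_transfer {V U : Type*} (r : Set (V × U))
    (F : Set U → Set U) (F' : Set V → Set V) (hF : Monotone F)
    (href : ∀ s : Set V, F ((relImage r sᶜ)ᶜ) ⊆ (relImage r (F' s)ᶜ)ᶜ) :
    ∀ s : Set U, relPreimage r (F s) ⊆ F' (relPreimage r s) := by
  intro s y hy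
  obtain ⟨x, hxF, hr⟩ := hy
  set t := relPreimage r s with ht
  have hsub : s ⊆ (relImage r tᶜ)ᶜ := by
    intro x hx hmem
    obtain ⟨y', hy't, hr'⟩ := hmem
    exact hy't ⟨x, hx, hr'⟩
  have hx2 : x ∈ (relImage r (F' t)ᶜ)ᶜ := href t (hF hsub hxF)
  by_contra hne
  exact hx2 ⟨y, hne, hr⟩
end

section
/- (WF for refined helpful event) Suppose p' ∩ complement of q' ⊆ r⁻¹[p ∩ complement of q], r⁻¹[p ∩ complement of q] ⊆ G'(q'), and r⁻¹[p ∩ complement of q] ∩ grd(G') ⊆ E(grd(G')), where E is the choice (F' ⫾ H)(s) = F'(s) ∩ H(s) and r⁻¹[p ∩ complement of q] ⊆ F'(p' ∪ q') ∩ H(p' ∪ q'). Then: (i) p' ∩ grd(G') ∩ complement of q' ⊆ E((p' ∩ grd(G')) ∪ q'), and (ii) p' ∩ grd(G') ∩ complement of q' ⊆ grd(G') ∩ G'(q'). -/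
/-- WF0 and WF1 for the refined helpful event `G'`, with `E = F' ⫾ H` the choice
(pointwise intersection), `w = r⁻¹[p ∩ qᶜ]` and `grd(G') = (G' ∅)ᶜ`. -/
theorem wf_refined_helpful_event {V : Type*}
    (F' G' H : Set V → Set V)
    (hF' : Monotone F') (hG' : Monotone G') (hH : Monotone H)
    (hF'conj : ∀ a b : Set V, F' (a ∩ b) = F' a ∩ F' b)
    (hHconj : ∀ a b : Set V, H (a ∩ b) = H a ∩ H b)
    (p' q' w : Set V)
    (hinc : p' ∩ q'ᶜ ⊆ w)
    (hGq : w ⊆ G' q')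
    (hsap : w ∩ (G' ∅)ᶜ ⊆ F' ((G' ∅)ᶜ) ∩ H ((G' ∅)ᶜ))
    (hstable : w ⊆ F' (p' ∪ q') ∩ H (p' ∪ q')) :
    (p' ∩ (G' ∅)ᶜ ∩ q'ᶜ ⊆
        F' ((p' ∩ (G' ∅)ᶜ) ∪ q') ∩ H ((p' ∩ (G' ∅)ᶜ) ∪ q')) ∧
      (p' ∩ (G' ∅)ᶜ ∩ q'ᶜ ⊆ (G' ∅)ᶜ ∩ G' q') := by
  constructor
  · intro x hx
    obtain ⟨⟨hp, hg⟩, hq⟩ := hx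
    have hw : x ∈ w := hinc ⟨hp, hq⟩
    have h1 := hsap ⟨hw, hg⟩
    have h2 := hstable hw
    have hsub : (p' ∪ q') ∩ (G' ∅)ᶜ ⊆ (p' ∩ (G' ∅)ᶜ) ∪ q' := by
      rintro y ⟨(hy | hy), hgy⟩
      · exact Or.inl ⟨hy, hgy⟩
      · exact Or.inr hy
    constructor
    · apply hF' hsub
      rw [hF'conj]
      exact ⟨h2.1, h1.1⟩
    · apply hH hsub
      rw [hHconj]
      exact ⟨h2.2, h1.2⟩
  · intro x hx
    obtain ⟨⟨hp, hg⟩, hq⟩ := hx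
    exact ⟨hg, hGq (hinc ⟨hp, hq⟩)⟩
end
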